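/- Let n, m, l be positive integers with m < n/2, l ≥ n+1 an odd prime. Suppose there exists a binary linear code C ⊆ F_2^{n+1} with dimension k and minimum Hamming weight ≥ 8m, which is contained in the even-weight code {c ∈ F_2^{n+1} : c_0 + ... + c_n = 0}. Then the lattice L = {v ∈ A_n^{(m,l)} : v mod 2 ∈ C} has volume 2^{n-k} · l^{m-1} · (n+1)^{1/2} and minimum squared norm at least 8m, hence center density at least 2^{k - n/2} · m^{n/2} / (l^{m-1} (n+1)^{1/2}). -/

import Mathlib

open Finset

noncomputable def derAt1 (n i : ℕ) : (Fin (n + 1) → ℤ) →ₗ[ℤ] ℤ :=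
  ∑ j : Fin (n + 1), (((j : ℕ).descFactorial i : ℤ)) • LinearMap.proj j

noncomputable def craigLat (n m l : ℕ) : Submodule ℤ (Fin (n + 1) → ℤ) :=
  LinearMap.ker (derAt1 n 0) ⊓
    ⨅ i ∈ Finset.Ioo 0 m, Submodule.comap (derAt1 n i) (Ideal.span {(l : ℤ)})

/-- Coordinatewise reduction modulo 2, as a ℤ-linear map. -/
noncomputable def mod2 (N : ℕ) : (Fin N → ℤ) →ₗ[ℤ] (Fin N → ZMod 2) :=
  LinearMap.pi fun i => (Int.castAddHom (ZMod 2)).toIntLinearMap.comp (LinearMap.proj i)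

/-! A nonzero vector of the lifted lattice either reduces to a nonzero codeword, and then has at
least `8m` odd coordinates, or is `2w` with `w` a nonzero vector of `A_n^{(m,l)}` (as `l` is odd).
In the latter case `|w|² ≥ 2m`. The defining congruences give `∑ wⱼ P(j) ≡ 0 (mod l)` for every
polynomial `P` of degree `< m`. Split `w = w⁺ - w⁻`; if `∑ |wⱼ| < 2m`, the multisets of points `j`
counted with multiplicities `w⁺ⱼ` and `w⁻ⱼ` have the same size `s < m` and the same power sums
in `ZMod l` up to `s`, so Newton's identities make them equal and `w = 0`.

For the index: reduction modulo 2 maps `A_n^{(m,l)}` onto the even-weight code `E`, since `l • u`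
lies in the lattice whenever `∑ uⱼ = 0`; so `L` has index `[E : C] = 2^(n-k)`. -/

open Polynomial

namespace Multiset

variable {R : Type*}

theorem mul_esymm_eq_sum [CommRing R] (s : Multiset R) (k : ℕ) :
    (k : R) * s.esymm k = (-1) ^ (k + 1) *
      ∑ a ∈ HasAntidiagonal.antidiagonal k with a.1 < k,
        (-1) ^ a.1 * s.esymm a.1 * (s.map (· ^ a.2)).sum := by
  set f : Fin s.toList.length → R := s.toList.get
  have hf : univ.val.map f = s := by
    rw [Fin.univ_val_map, List.ofFn_get, coe_toList]
  have := congrArg (MvPolynomial.aeval f)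
    (MvPolynomial.mul_esymm_eq_sum (Fin s.toList.length) R k)
  simp only [map_mul, map_natCast, map_sum, map_pow, map_neg, map_one, MvPolynomial.psum,
    MvPolynomial.aeval_esymm_eq_multiset_esymm, MvPolynomial.aeval_X] at this
  simpa only [← hf, Multiset.map_map, Function.comp_def, Finset.sum_eq_multiset_sum] using this

variable [CommRing R] [IsDomain R] {s t : Multiset R} {N : ℕ}

theorem esymm_eq_of_sum_map_pow_eq (hchar : ∀ i ≤ N, 0 < i → (i : R) ≠ 0)
    (h : ∀ i ≤ N, 0 < i → (s.map (· ^ i)).sum = (t.map (· ^ i)).sum) :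
    ∀ i ≤ N, s.esymm i = t.esymm i := by
  intro i
  induction i using Nat.strong_induction_on with
  | _ i ih =>
    intro hiN
    rcases Nat.eq_zero_or_pos i with rfl | hi
    · simp [esymm]
    refine mul_left_cancel₀ (hchar i hiN hi) ?_
    rw [mul_esymm_eq_sum, mul_esymm_eq_sum]
    congr 1
    refine sum_congr rfl fun a ha => ?_
    rw [Finset.mem_filter, Finset.HasAntidiagonal.mem_antidiagonal] at ha
    rw [ih a.1 ha.2 (by omega), h a.2 (by omega) (by omega)]

theorem eq_of_sum_map_pow_eq (hcard : card s = card t)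
    (hchar : ∀ i ≤ card s, 0 < i → (i : R) ≠ 0)
    (h : ∀ i ≤ card s, 0 < i → (s.map (· ^ i)).sum = (t.map (· ^ i)).sum) : s = t := by
  have hesymm := esymm_eq_of_sum_map_pow_eq hchar h
  have hprod : (s.map fun a => X - C a).prod = (t.map fun a => X - C a).prod := by
    rw [prod_X_sub_X_eq_sum_esymm, prod_X_sub_X_eq_sum_esymm, ← hcard]
    refine sum_congr rfl fun j hj => ?_
    rw [hesymm j (Nat.lt_succ_iff.mp (Finset.mem_range.mp hj))]
  simpa only [roots_multiset_prod_X_sub_C] using congrArg roots hprod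

end Multiset

section WeightedPoints

variable {ι R : Type*} [Fintype ι]

open Multiset

theorem Multiset.card_sum_replicate (u : ι → ℕ) (x : ι → R) :
    card (∑ j, replicate (u j) (x j)) = ∑ j, u j := by
  rw [← cardHom_apply, map_sum]
  simp

theorem Multiset.sum_map_sum_replicate [Semiring R] (u : ι → ℕ) (x : ι → R) (g : R → R) :
    ((∑ j, replicate (u j) (x j)).map g).sum = ∑ j, (u j : R) * g (x j) := by
  rw [← mapAddMonoidHom_apply, map_sum, ← coe_sumAddMonoidHom, map_sum]
  simp

theorem Multiset.count_sum_replicate [DecidableEq R] (u : ι → ℕ) {x : ι → R}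
    (hx : Function.Injective x) (j : ι) : count (x j) (∑ i, replicate (u i) (x i)) = u j := by
  classical
  simp [count_sum', count_replicate, hx.eq_iff]

theorem sum_toNat_eq_sum_toNat_neg {w : ι → ℤ} (hw : ∑ j, w j = 0) :
    ∑ j, (w j).toNat = ∑ j, (-w j).toNat := by
  zify
  rw [← sub_eq_zero, ← sum_sub_distrib]
  simpa only [Int.toNat_sub_toNat_neg] using hw

theorem eq_zero_of_sum_mul_pow_eq_zero [CommRing R] [IsDomain R] {x : ι → R}
    (hx : Function.Injective x) {w : ι → ℤ} (hw : ∑ j, w j = 0)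
    (hchar : ∀ i ≤ ∑ j, (w j).toNat, 0 < i → (i : R) ≠ 0)
    (h : ∀ i ≤ ∑ j, (w j).toNat, 0 < i → ∑ j, (w j : R) * x j ^ i = 0) : w = 0 := by
  classical
  have hcard := sum_toNat_eq_sum_toNat_neg hw
  have hpoints : ∑ j, replicate (w j).toNat (x j) = ∑ j, replicate (-w j).toNat (x j) := by
    refine eq_of_sum_map_pow_eq ?_ ?_ ?_ <;> simp only [card_sum_replicate, hcard]
    · exact hcard ▸ hchar
    intro i hi hi0
    rw [sum_map_sum_replicate, sum_map_sum_replicate, ← sub_eq_zero, ← sum_sub_distrib,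
      ← h i (hcard ▸ hi) hi0]
    refine sum_congr rfl fun j _ => ?_
    have hwj := congrArg (Int.cast : ℤ → R) (w j).toNat_sub_toNat_neg
    push_cast at hwj
    rw [← sub_mul, hwj]
  funext j
  have := congrArg (count (x j)) hpoints
  rw [count_sum_replicate _ hx, count_sum_replicate _ hx] at this
  simp only [Pi.zero_apply]
  omega

end WeightedPoints

theorem dvd_sum_mul_eval_of_degree_lt {ι : Type*} [Fintype ι] (x w : ι → ℤ) {a : ℤ} {m : ℕ}
    (h : ∀ i < m, a ∣ ∑ j, w j * (descPochhammer ℤ i).eval (x j)) {P : ℤ[X]}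
    (hP : P.degree < m) : a ∣ ∑ j, w j * P.eval (x j) := by
  induction m generalizing P with
  | zero =>
    rw [Nat.cast_zero, Nat.WithBot.lt_zero_iff, degree_eq_bot] at hP
    simp [hP]
  | succ d ih =>
    set c := P.coeff d
    have hlead : (descPochhammer ℤ d).coeff d = 1 := by
      simpa only [descPochhammer_natDegree] using (monic_descPochhammer ℤ d).coeff_natDegree
    have hQ : (P - C c * descPochhammer ℤ d).degree < d := by
      rw [degree_lt_iff_coeff_zero]
      intro k hk
      rcases hk.eq_or_lt with rfl | hk
      · rw [coeff_sub, coeff_C_mul, hlead, mul_one, sub_self]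
      · rw [coeff_sub, coeff_C_mul, coeff_eq_zero_of_degree_lt (hP.trans_le (by exact_mod_cast hk)),
          coeff_eq_zero_of_natDegree_lt (by rwa [descPochhammer_natDegree]), mul_zero, sub_zero]
    have hsplit : ∑ j, w j * P.eval (x j) = ∑ j, w j * (P - C c * descPochhammer ℤ d).eval (x j)
        + c * ∑ j, w j * (descPochhammer ℤ d).eval (x j) := by
      rw [mul_sum, ← sum_add_distrib]
      refine sum_congr rfl fun j _ => ?_
      simp only [eval_sub, eval_mul, eval_C]
      ring
    rw [hsplit]
    exact dvd_add (ih (fun i hi => h i (by omega)) hQ) (dvd_mul_of_dvd_right (h d d.lt_succ_self) c)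

theorem Submodule.relIndex_toAddSubgroup {K V : Type*} [Field K] [Finite K] [AddCommGroup V]
    [Module K V] [FiniteDimensional K V] {p q : Submodule K V} (h : p ≤ q) :
    p.toAddSubgroup.relIndex q.toAddSubgroup =
      Nat.card K ^ (Module.finrank K q - Module.finrank K p) := by
  have hmul := AddSubgroup.relIndex_mul_relIndex ⊥ p.toAddSubgroup q.toAddSubgroup bot_le h
  rw [AddSubgroup.relIndex_bot_left, AddSubgroup.relIndex_bot_left] at hmul
  change Nat.card p * _ = Nat.card q at hmul
  rw [Module.natCard_eq_pow_finrank (K := K) (V := p),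
    Module.natCard_eq_pow_finrank (K := K) (V := q),
    ← Nat.sub_add_cancel (Submodule.finrank_mono h), pow_add, mul_comm] at hmul
  exact Nat.eq_of_mul_eq_mul_right (pow_pos Nat.card_pos _) hmul

theorem AddSubgroup.index_inf_comap_addSubgroupOf {G G' : Type*} [AddGroup G] [AddGroup G']
    (f : G →+ G') (H : AddSubgroup G) (K : AddSubgroup G') :
    ((H ⊓ K.comap f).addSubgroupOf H).index = K.relIndex (H.map f) := by
  rw [← AddSubgroup.relIndex_comap]
  exact AddSubgroup.inf_relIndex_left _ _

section CraigLattice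

variable {n m l : ℕ} {v : Fin (n + 1) → ℤ}

theorem derAt1_apply (n i : ℕ) (v : Fin (n + 1) → ℤ) :
    derAt1 n i v = ∑ j : Fin (n + 1), ((j : ℕ).descFactorial i : ℤ) * v j := by
  simp [derAt1, LinearMap.sum_apply]

theorem mem_craigLat_iff :
    v ∈ craigLat n m l ↔ ∑ j, v j = 0 ∧ ∀ i ∈ Ioo 0 m, (l : ℤ) ∣ derAt1 n i v := by
  simp [craigLat, Submodule.mem_iInf, Ideal.mem_span_singleton, derAt1_apply]

theorem dvd_derAt1_of_mem_craigLat (hv : v ∈ craigLat n m l) {i : ℕ} (hi : i < m) :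
    (l : ℤ) ∣ derAt1 n i v := by
  rcases Nat.eq_zero_or_pos i with rfl | hi0
  · simp [derAt1_apply, (mem_craigLat_iff.mp hv).1]
  · exact (mem_craigLat_iff.mp hv).2 i (mem_Ioo.mpr ⟨hi0, hi⟩)

theorem dvd_sum_mul_pow_of_mem_craigLat (hv : v ∈ craigLat n m l) {i : ℕ} (hi : i < m) :
    (l : ℤ) ∣ ∑ j : Fin (n + 1), v j * ((j : ℕ) : ℤ) ^ i := by
  have hdesc (i : ℕ) (hi : i < m) :
      (l : ℤ) ∣ ∑ j : Fin (n + 1), v j * (descPochhammer ℤ i).eval ((j : ℕ) : ℤ) := by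
    simpa only [descPochhammer_eval_eq_descFactorial, derAt1_apply, mul_comm]
      using dvd_derAt1_of_mem_craigLat hv hi
  simpa using dvd_sum_mul_eval_of_degree_lt _ v hdesc (P := X ^ i) (by simpa using hi)

theorem two_mul_sum_toNat_le_sum_sq {ι : Type*} [Fintype ι] {w : ι → ℤ} (hw : ∑ j, w j = 0) :
    2 * ∑ j, ((w j).toNat : ℤ) ≤ ∑ j, w j ^ 2 :=
  calc 2 * ∑ j, ((w j).toNat : ℤ) = ∑ j, (((w j).toNat : ℤ) + (-w j).toNat) := by
        rw [sum_add_distrib, two_mul]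
        exact_mod_cast congrArg (_ + ·) (sum_toNat_eq_sum_toNat_neg hw)
    _ = ∑ j, ((w j).natAbs : ℤ) :=
        sum_congr rfl fun j _ => by exact_mod_cast Int.toNat_add_toNat_neg_eq_natAbs (w j)
    _ ≤ ∑ j, w j ^ 2 := sum_le_sum fun j _ => Int.natAbs_le_self_sq (w j)

theorem two_mul_le_sum_sq_of_mem_craigLat (hlp : l.Prime) (hnl : n < l) (hml : m ≤ l)
    (hv : v ∈ craigLat n m l) (hv0 : v ≠ 0) : (2 * m : ℤ) ≤ ∑ j, v j ^ 2 := by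
  have := Fact.mk hlp
  by_contra! hlt
  have hsum := (mem_craigLat_iff.mp hv).1
  have hs : ∑ j, (v j).toNat < m := by
    have := two_mul_sum_toNat_le_sum_sq hsum
    zify
    omega
  refine hv0 (eq_zero_of_sum_mul_pow_eq_zero (x := fun j : Fin (n + 1) => ((j : ℕ) : ZMod l))
    ?_ hsum ?_ ?_)
  · intro a b hab
    rw [ZMod.natCast_eq_natCast_iff', Nat.mod_eq_of_lt (by omega), Nat.mod_eq_of_lt (by omega)]
      at hab
    exact Fin.ext hab
  · intro i hi hi0 hzero
    have := Nat.le_of_dvd hi0 ((ZMod.natCast_eq_zero_iff i l).mp hzero)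
    omega
  · intro i hi _
    have := (ZMod.intCast_zmod_eq_zero_iff_dvd _ l).mpr
      (dvd_sum_mul_pow_of_mem_craigLat hv (i := i) (by omega))
    push_cast at this
    exact this

end CraigLattice

section Code

variable {n m l : ℕ}

theorem mod2_apply {N : ℕ} (v : Fin N → ℤ) (j : Fin N) : mod2 N v j = v j := rfl

theorem mem_craigLat_of_smul_mem {c : ℤ} (hc : c ≠ 0) (hcl : IsCoprime (l : ℤ) c)
    {v : Fin (n + 1) → ℤ} (h : c • v ∈ craigLat n m l) : v ∈ craigLat n m l := by
  rw [mem_craigLat_iff] at h ⊢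
  obtain ⟨hsum, hdvd⟩ := h
  refine ⟨?_, fun i hi => ?_⟩
  · simp only [Pi.smul_apply, smul_eq_mul, ← mul_sum] at hsum
    exact (mul_eq_zero.mp hsum).resolve_left hc
  · have := hdvd i hi
    rw [map_smul, smul_eq_mul] at this
    exact hcl.dvd_of_dvd_mul_left this

theorem hammingNorm_mod2_le_sum_sq {N : ℕ} (v : Fin N → ℤ) :
    (hammingNorm (mod2 N v) : ℤ) ≤ ∑ j, v j ^ 2 := by
  rw [hammingNorm, card_filter]
  push_cast
  refine sum_le_sum fun j _ => ?_
  split_ifs with h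
  · have hv : v j ≠ 0 := fun h0 => h (by simp [mod2_apply, h0])
    have : 0 < v j ^ 2 := by positivity
    omega
  · positivity

theorem eight_mul_le_sum_sq_of_mem_craigLat_of_mod2_mem (hlp : l.Prime) (hnl : n < l)
    (hml : m ≤ l) (hlodd : Odd l) {C : Submodule (ZMod 2) (Fin (n + 1) → ZMod 2)}
    (hCw : ∀ c ∈ C, c ≠ 0 → 8 * m ≤ hammingNorm c) {v : Fin (n + 1) → ℤ}
    (hv : v ∈ craigLat n m l) (hvC : mod2 (n + 1) v ∈ C) (hv0 : v ≠ 0) :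
    (8 * m : ℤ) ≤ ∑ j, v j ^ 2 := by
  by_cases hz : mod2 (n + 1) v = 0
  · have heven (j : Fin (n + 1)) : (2 : ℤ) ∣ v j :=
      (ZMod.intCast_zmod_eq_zero_iff_dvd _ 2).mp (congrFun hz j)
    choose w hw using heven
    obtain rfl : v = (2 : ℤ) • w := funext hw
    have hw0 : w ≠ 0 := by rintro rfl; simp at hv0
    have hcop : IsCoprime (l : ℤ) 2 := by
      exact_mod_cast Nat.isCoprime_iff_coprime.mpr (Nat.coprime_two_right.mpr hlodd)
    have := two_mul_le_sum_sq_of_mem_craigLat hlp hnl hml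
      (mem_craigLat_of_smul_mem two_ne_zero hcop hv) hw0
    simp only [Pi.smul_apply, smul_eq_mul, mul_pow, ← mul_sum]
    linarith
  · have := hCw _ hvC hz
    have := hammingNorm_mod2_le_sum_sq v
    omega

def evenWeightCode (N : ℕ) : Submodule (ZMod 2) (Fin N → ZMod 2) :=
  LinearMap.ker (∑ j, LinearMap.proj j)

theorem mem_evenWeightCode {N : ℕ} {x : Fin N → ZMod 2} :
    x ∈ evenWeightCode N ↔ ∑ j, x j = 0 := by
  simp [evenWeightCode, LinearMap.sum_apply]

theorem finrank_evenWeightCode (n : ℕ) :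
    Module.finrank (ZMod 2) (evenWeightCode (n + 1)) = n := by
  set φ : (Fin (n + 1) → ZMod 2) →ₗ[ZMod 2] ZMod 2 := ∑ j, LinearMap.proj j
  have hsurj : Function.Surjective φ :=
    fun y => ⟨Pi.single 0 y, by simp [φ, LinearMap.sum_apply]⟩
  have := LinearMap.finrank_range_add_finrank_ker φ
  rw [LinearMap.range_eq_top.mpr hsurj, finrank_top, Module.finrank_self,
    Module.finrank_fin_fun] at this
  change Module.finrank (ZMod 2) (LinearMap.ker φ) = n
  omega

theorem mod2_mem_evenWeightCode {v : Fin (n + 1) → ℤ} (hv : v ∈ craigLat n m l) :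
    mod2 (n + 1) v ∈ evenWeightCode (n + 1) := by
  rw [mem_evenWeightCode]
  simpa [mod2_apply] using congrArg (Int.cast : ℤ → ZMod 2) (mem_craigLat_iff.mp hv).1

theorem exists_sum_eq_zero_mod2_eq {x : Fin (n + 1) → ZMod 2} (hx : x ∈ evenWeightCode (n + 1)) :
    ∃ u : Fin (n + 1) → ℤ, ∑ j, u j = 0 ∧ mod2 (n + 1) u = x := by
  rw [mem_evenWeightCode, Fin.sum_univ_succ] at hx
  refine ⟨Fin.cons (-∑ j : Fin n, ((x j.succ).val : ℤ)) fun j : Fin n => ((x j.succ).val : ℤ),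
    by simp [Fin.sum_univ_succ], funext fun j => Fin.cases ?_ (fun j => ?_) j⟩
  · rw [eq_neg_of_add_eq_zero_left hx]
    simp [mod2_apply]
  · simp [mod2_apply]

theorem natCast_smul_mem_craigLat {u : Fin (n + 1) → ℤ} (hu : ∑ j, u j = 0) :
    (l : ℤ) • u ∈ craigLat n m l := by
  rw [mem_craigLat_iff]
  refine ⟨by simp [← mul_sum, hu], fun i _ => ?_⟩
  rw [map_smul, smul_eq_mul]
  exact dvd_mul_right _ _

theorem mod2_natCast_smul_of_odd {N : ℕ} (hl : Odd l) (u : Fin N → ℤ) :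
    mod2 N ((l : ℤ) • u) = mod2 N u := by
  funext j
  simp [mod2_apply, (ZMod.natCast_eq_one_iff_odd).mpr hl]

theorem map_mod2_craigLat (hl : Odd l) :
    (craigLat n m l).map (mod2 (n + 1)) = (evenWeightCode (n + 1)).restrictScalars ℤ := by
  ext x
  constructor
  · rintro ⟨v, hv, rfl⟩
    exact mod2_mem_evenWeightCode hv
  · intro hx
    obtain ⟨u, hu, rfl⟩ := exists_sum_eq_zero_mod2_eq hx
    exact ⟨_, natCast_smul_mem_craigLat hu, mod2_natCast_smul_of_odd hl u⟩

end Code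

theorem centerDensity_eq {n m l k : ℕ} (hkn : k ≤ n) :
    (Real.sqrt (8 * m) / 2) ^ n / ((2 : ℝ) ^ (n - k) * (l : ℝ) ^ (m - 1) * Real.sqrt (n + 1))
      = (2 : ℝ) ^ ((k : ℝ) - (n : ℝ) / 2) * (m : ℝ) ^ ((n : ℝ) / 2)
          / ((l : ℝ) ^ (m - 1) * Real.sqrt (n + 1)) := by
  have hsqrt : Real.sqrt (8 * m) / 2 = Real.sqrt (2 * m) := by
    rw [show (8 * m : ℝ) = 2 ^ 2 * (2 * m) by ring, Real.sqrt_mul (by positivity),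
      Real.sqrt_sq zero_le_two]
    ring
  have hpow : Real.sqrt (2 * m) ^ n = (2 : ℝ) ^ ((n : ℝ) / 2) * (m : ℝ) ^ ((n : ℝ) / 2) := by
    rw [Real.sqrt_eq_rpow, ← Real.rpow_natCast, ← Real.rpow_mul (by positivity),
      Real.mul_rpow zero_le_two (Nat.cast_nonneg m), one_div_mul_eq_div]
  have htwo : (2 : ℝ) ^ ((n : ℝ) / 2) = (2 : ℝ) ^ ((k : ℝ) - (n : ℝ) / 2) * 2 ^ (n - k) := by
    rw [← Real.rpow_natCast, Nat.cast_sub hkn, ← Real.rpow_add two_pos]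
    ring_nf
  rw [hsqrt, hpow, htwo]
  field_simp

theorem craig_code_lift_general (n m l k : ℕ) (hmn : 2 * m < n)
    (hl : n + 1 ≤ l) (hlp : l.Prime) (hlodd : Odd l)
    (C : Submodule (ZMod 2) (Fin (n + 1) → ZMod 2))
    (hk : Module.finrank (ZMod 2) C = k)
    (hCw : ∀ c ∈ C, c ≠ 0 → 8 * m ≤ hammingNorm c)
    (hCe : ∀ c ∈ C, ∑ i, c i = 0) :
    ∀ L : Submodule ℤ (Fin (n + 1) → ℤ),
      L = craigLat n m l ⊓ Submodule.comap (mod2 (n + 1)) (C.restrictScalars ℤ) →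
      (∀ v ∈ L, v ≠ 0 → (8 * m : ℤ) ≤ ∑ j, (v j) ^ 2) ∧
      ((L.toAddSubgroup).addSubgroupOf ((craigLat n m l).toAddSubgroup)).index = 2 ^ (n - k) ∧
      (Real.sqrt (8 * m) / 2) ^ n / ((2 : ℝ) ^ (n - k) * (l : ℝ) ^ (m - 1) * Real.sqrt (n + 1))
        ≥ (2 : ℝ) ^ ((k : ℝ) - (n : ℝ) / 2) * (m : ℝ) ^ ((n : ℝ) / 2)
            / ((l : ℝ) ^ (m - 1) * Real.sqrt (n + 1)) := by
  rintro L rfl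
  have hCE : C ≤ evenWeightCode (n + 1) := fun c hc => mem_evenWeightCode.mpr (hCe c hc)
  have hkn : k ≤ n := by
    simpa only [hk, finrank_evenWeightCode] using Submodule.finrank_mono hCE
  refine ⟨fun v hv hv0 => ?_, ?_, (centerDensity_eq hkn).ge⟩
  · exact eight_mul_le_sum_sq_of_mem_craigLat_of_mod2_mem hlp (by omega) (by omega) hlodd hCw
      hv.1 hv.2 hv0
  · have hL : (craigLat n m l ⊓ (C.restrictScalars ℤ).comap (mod2 (n + 1))).toAddSubgroup =
        (craigLat n m l).toAddSubgroup ⊓ C.toAddSubgroup.comap (mod2 (n + 1)).toAddMonoidHom :=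
      rfl
    have hmap : (craigLat n m l).toAddSubgroup.map (mod2 (n + 1)).toAddMonoidHom =
        (evenWeightCode (n + 1)).toAddSubgroup :=
      congrArg Submodule.toAddSubgroup (map_mod2_craigLat hlodd)
    rw [hL, AddSubgroup.index_inf_comap_addSubgroupOf, hmap, Submodule.relIndex_toAddSubgroup hCE,
      finrank_evenWeightCode, hk, Nat.card_zmod]

/-- Lifting a binary linear `[n+1, k, ≥ 8m]` subcode of the even-weight code through the
analogous Craig lattice `A_n^{(m,l)}` gives a lattice of index `2^{n-k}` in `A_n^{(m,l)}`
(hence volume `2^{n-k} l^{m-1} (n+1)^{1/2}`) and minimum squared norm at least `8m`,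
hence of center density at least `2^{k-n/2} m^{n/2} / (l^{m-1}(n+1)^{1/2})`. -/
theorem craig_code_lift (n m l k : ℕ) (hm : 0 < m) (hmn : 2 * m < n)
    (hl : n + 1 ≤ l) (hlp : l.Prime) (hlodd : Odd l)
    (C : Submodule (ZMod 2) (Fin (n + 1) → ZMod 2))
    (hk : Module.finrank (ZMod 2) C = k)
    (hCw : ∀ c ∈ C, c ≠ 0 → 8 * m ≤ hammingNorm c)
    (hCe : ∀ c ∈ C, ∑ i, c i = 0) :
    ∀ L : Submodule ℤ (Fin (n + 1) → ℤ),
      L = craigLat n m l ⊓ Submodule.comap (mod2 (n + 1)) (C.restrictScalars ℤ) →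
      (∀ v ∈ L, v ≠ 0 → (8 * m : ℤ) ≤ ∑ j, (v j) ^ 2) ∧
      ((L.toAddSubgroup).addSubgroupOf ((craigLat n m l).toAddSubgroup)).index = 2 ^ (n - k) ∧
      (Real.sqrt (8 * m) / 2) ^ n / ((2 : ℝ) ^ (n - k) * (l : ℝ) ^ (m - 1) * Real.sqrt (n + 1))
        ≥ (2 : ℝ) ^ ((k : ℝ) - (n : ℝ) / 2) * (m : ℝ) ^ ((n : ℝ) / 2)
            / ((l : ℝ) ^ (m - 1) * Real.sqrt (n + 1)) :=
  craig_code_lift_general n m l k hmn hl hlp hlodd C hk hCw hCe
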